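/- Let R be a commutative ring, M an R-module, A ∈ M, and let b_d, …, b_0 be bits with k = Σ_{0 ≤ i ≤ d} b_i·2^i, and let c_d, …, c_0 ∈ R be arbitrary scalars (one per iteration). Define x, y ∈ M by x = 0, y = −A, and for i = d down to 0: if b_i = 1 then simultaneously x ← c_i·(x + y + A) − (2y + A) and y ← 2y; otherwise y ← c_i·(y + x + A) − (2x + A) and x ← 2x. Then after processing all bits, x = k·A (and y = −(x + A) throughout). -/

import Mathlib

/-!
Once `y = -(x + A)` holds, the point `x + y + A` fed to the coefficient `cᵢ` is `0`, so the
coefficients drop out and one iteration is `x ← 2x + bᵢ•A`, `y ← -(x + A)`: Horner's rule for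
`k`, read from the top bit down, applied to `A`.
-/

/-- State of the semi-interleaved ladder for scalar multiplication with
per-iteration coefficients after `j` iterations: starting from
`(x, y) = (0, −A)`, iteration `j` (which processes bit `i = d - j`, i.e. bits
are processed from `i = d` down to `0`) simultaneously updates, when the bit is
`1`, `x ← cᵢ•(x + y + A) − (2y + A)` and `y ← 2y`, and otherwise
`y ← cᵢ•(y + x + A) − (2x + A)` and `x ← 2x`. -/
def semiLadderSM {R M : Type*} [CommRing R] [AddCommGroup M] [Module R M]
    (A : M) (b : ℕ → Bool) (c : ℕ → R) (d : ℕ) : ℕ → M × M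
  | 0 => (0, -A)
  | j + 1 =>
    let s := semiLadderSM A b c d j
    let i := d - j
    if b i then
      (c i • (s.1 + s.2 + A) - (s.2 + s.2 + A), s.2 + s.2)
    else
      (s.1 + s.1, c i • (s.2 + s.1 + A) - (s.1 + s.1 + A))

def bitsValue (b : ℕ → Bool) (m n : ℕ) : ℕ :=
  ∑ i ∈ Finset.range n, if b (m + i) then 2 ^ i else 0

theorem bitsValue_succ (b : ℕ → Bool) (m n : ℕ) :
    bitsValue b m (n + 1) = 2 * bitsValue b (m + 1) n + if b m then 1 else 0 := by
  simp only [bitsValue, Finset.sum_range_succ', Finset.mul_sum, pow_succ, add_zero, pow_zero]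
  congr 1
  refine Finset.sum_congr rfl fun i _ => ?_
  rw [show m + (i + 1) = m + 1 + i by omega]
  split <;> ring

section

variable {R M : Type*} [CommRing R] [AddCommGroup M] [Module R M]
  (A : M) (b : ℕ → Bool) (c : ℕ → R) (d : ℕ)

theorem semiLadderSM_succ_of_eq {j n : ℕ}
    (h : semiLadderSM A b c d j = (n • A, -(n • A + A))) :
    let n' := 2 * n + if b (d - j) then 1 else 0
    semiLadderSM A b c d (j + 1) = (n' • A, -(n' • A + A)) := by
  have hsum : n • A + -(n • A + A) + A = 0 := by abel
  have hsum' : -(n • A + A) + n • A + A = 0 := by abel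
  simp only [semiLadderSM, h]
  cases b (d - j)
  · simp only [Bool.false_eq_true, if_false, add_zero, hsum', smul_zero, zero_sub, mul_smul,
      two_smul]
  · simp only [if_true, hsum, smul_zero, zero_sub, add_smul, mul_smul, two_smul, one_smul,
      Prod.mk.injEq]
    constructor <;> abel

theorem semiLadderSM_eq_bitsValue {j m : ℕ} (hjm : m + j = d + 1) :
    semiLadderSM A b c d j = (bitsValue b m j • A, -(bitsValue b m j • A + A)) := by
  induction j generalizing m with
  | zero => simp [semiLadderSM, bitsValue]
  | succ j ih =>
    have hm : d - j = m := by omega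
    rw [semiLadderSM_succ_of_eq A b c d (ih (m := m + 1) (by omega)), hm, bitsValue_succ]

end

/-- after processing the bits `b d, …, b 0` of `k`, the
semi-interleaved ladder for scalar multiplication with arbitrary per-iteration
coefficients `c i` computes `x = k • A`, with `y = −(x + A)` throughout. -/
theorem semiLadderSM_correct {R M : Type*} [CommRing R] [AddCommGroup M]
    [Module R M] (A : M) (d : ℕ) (b : ℕ → Bool) (c : ℕ → R) (k : ℕ)
    (hk : k = ∑ i ∈ Finset.range (d + 1), (if b i then 2 ^ i else 0)) :
    (semiLadderSM A b c d (d + 1)).1 = k • A ∧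
      ∀ j ≤ d + 1,
        (semiLadderSM A b c d j).2 = -((semiLadderSM A b c d j).1 + A) := by
  refine ⟨?_, fun j hj => ?_⟩
  · rw [semiLadderSM_eq_bitsValue A b c d (m := 0) (zero_add _), hk]
    simp only [bitsValue, zero_add]
  · rw [semiLadderSM_eq_bitsValue A b c d (m := d + 1 - j) (by omega)]
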